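/- Let P_k denote the path on k vertices and let p ≥ 1 be an integer. If k > 2p, then 2p ≤ χ_l^{p,1}(P_k) ≤ 2p + 1. -/

import Mathlib

open SimpleGraph

/-- A (p,1)-total labelling of `G`: adjacent vertices get distinct colors, edges sharing an
endpoint get distinct colors, and a vertex and an incident edge differ by at least `p`. -/
def IsPOneTotalLabelling {V : Type*} (G : SimpleGraph V) (p : ℕ)
    (cv : V → ℤ) (ce : G.edgeSet → ℤ) : Prop :=
  (∀ u v : V, G.Adj u v → cv u ≠ cv v) ∧
  (∀ e f : G.edgeSet, e ≠ f → (∃ v : V, v ∈ (e : Sym2 V) ∧ v ∈ (f : Sym2 V)) → ce e ≠ ce f) ∧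
  (∀ (v : V) (e : G.edgeSet), v ∈ (e : Sym2 V) → (p : ℤ) ≤ |cv v - ce e|)

/-- χ_{p,1}^T(G): least `k` such that `G` has a (p,1)-total labelling with colors in
`{0, …, k-1}`. -/
noncomputable def pOneTotalChromatic {V : Type*} (G : SimpleGraph V) (p : ℕ) : ℕ :=
  sInf {k : ℕ | ∃ cv ce, IsPOneTotalLabelling G p cv ce ∧
    (∀ v : V, cv v ∈ Set.Ico (0 : ℤ) k) ∧ (∀ e : G.edgeSet, ce e ∈ Set.Ico (0 : ℤ) k)}

/-- λ_p^T(G): least `k` such that `G` has a (p,1)-total labelling with colors in `{0, …, k}`. -/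
noncomputable def pOneTotalNumber {V : Type*} (G : SimpleGraph V) (p : ℕ) : ℕ :=
  sInf {k : ℕ | ∃ cv ce, IsPOneTotalLabelling G p cv ce ∧
    (∀ v : V, cv v ∈ Set.Icc (0 : ℤ) k) ∧ (∀ e : G.edgeSet, ce e ∈ Set.Icc (0 : ℤ) k)}

/-- `G` is `L`-(p,1)-total labelable for list assignment `(Lv, Le)`. -/
def ListPOneTotalLabelable {V : Type*} (G : SimpleGraph V) (p : ℕ)
    (Lv : V → Finset ℤ) (Le : G.edgeSet → Finset ℤ) : Prop :=
  ∃ cv ce, IsPOneTotalLabelling G p cv ce ∧ (∀ v, cv v ∈ Lv v) ∧ (∀ e, ce e ∈ Le e)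

/-- C_{p,1}^T(G): least `k` such that `G` is `L`-(p,1)-total labelable for every list
assignment whose lists all have size `k`. -/
noncomputable def pOneTotalChoosability {V : Type*} (G : SimpleGraph V) (p : ℕ) : ℕ :=
  sInf {k : ℕ | ∀ (Lv : V → Finset ℤ) (Le : G.edgeSet → Finset ℤ),
    (∀ v, (Lv v).card = k) → (∀ e, (Le e).card = k) → ListPOneTotalLabelable G p Lv Le}

/-- An L(p,q)-labelling of `H`. -/
def IsLpqLabelling {V : Type*} (H : SimpleGraph V) (p q : ℕ) (f : V → ℤ) : Prop :=
  (∀ u v : V, H.Adj u v → (p : ℤ) ≤ |f u - f v|) ∧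
  (∀ u v : V, H.dist u v = 2 → (q : ℤ) ≤ |f u - f v|)

/-- χ^{p,q}(H): least `k` such that `H` has an L(p,q)-labelling with colors in `{0, …, k-1}`. -/
noncomputable def LpqChromatic {V : Type*} (H : SimpleGraph V) (p q : ℕ) : ℕ :=
  sInf {k : ℕ | ∃ f, IsLpqLabelling H p q f ∧ ∀ v : V, f v ∈ Set.Ico (0 : ℤ) k}

/-- χ_l^{p,q}(H): least `k` such that from every assignment of lists of size `k`, `H` has an
L(p,q)-labelling choosing each vertex's color from its list. -/
noncomputable def listLpqChromatic {V : Type*} (H : SimpleGraph V) (p q : ℕ) : ℕ :=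
  sInf {k : ℕ | ∀ L : V → Finset ℤ, (∀ v, (L v).card = k) →
    ∃ f, IsLpqLabelling H p q f ∧ ∀ v : V, f v ∈ L v}

/-- The star `K_{1,n}`: vertex `0` is the center, adjacent to the `n` leaves. -/
def starGraph (n : ℕ) : SimpleGraph (Fin (n + 1)) :=
  SimpleGraph.fromRel (fun v w => v = 0 ∨ w = 0)

/-- The incidence graph `S_I(G)`: replace every edge of `G` by a path of length 2. -/
def incidenceGraph {V : Type*} (G : SimpleGraph V) : SimpleGraph (V ⊕ G.edgeSet) where
  Adj x y :=
    (∃ (v : V) (e : G.edgeSet), x = Sum.inl v ∧ y = Sum.inr e ∧ v ∈ (e : Sym2 V)) ∨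
    (∃ (v : V) (e : G.edgeSet), x = Sum.inr e ∧ y = Sum.inl v ∧ v ∈ (e : Sym2 V))
  symm := .mk <| by
    rintro x y (⟨v, e, rfl, rfl, h⟩ | ⟨v, e, rfl, rfl, h⟩)
    · exact Or.inr ⟨v, e, rfl, rfl, h⟩
    · exact Or.inl ⟨v, e, rfl, rfl, h⟩
  loopless := .mk <| by
    rintro x (⟨v, e, h1, h2, -⟩ | ⟨v, e, h1, h2, -⟩) <;> subst h1 <;> simp at h2

/-- `H` is a minor of `G`: there are pairwise disjoint nonempty connected branch sets in `G`,
one for each vertex of `H`, with an edge of `G` between the branch sets of any two vertices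
adjacent in `H`. -/
def IsGraphMinor {W V : Type*} (H : SimpleGraph W) (G : SimpleGraph V) : Prop :=
  ∃ B : W → Set V,
    (∀ w, (B w).Nonempty) ∧
    (∀ w, (G.induce (B w)).Connected) ∧
    (∀ w₁ w₂, w₁ ≠ w₂ → Disjoint (B w₁) (B w₂)) ∧
    (∀ w₁ w₂, H.Adj w₁ w₂ → ∃ v₁ ∈ B w₁, ∃ v₂ ∈ B w₂, G.Adj v₁ v₂)

/-- A graph is outerplanar iff it has neither `K₄` nor `K_{2,3}` as a minor. -/
def Outerplanar {V : Type*} (G : SimpleGraph V) : Prop :=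
  ¬ IsGraphMinor (completeGraph (Fin 4)) G ∧
  ¬ IsGraphMinor (completeBipartiteGraph (Fin 2) (Fin 3)) G

/-!
Upper bound: label the path greedily from one end. At vertex `i` the label of vertex `i - 1`
excludes the `2p - 1` integers within distance `< p` of it and the label of vertex `i - 2` one
more, so a list of `2p + 1` integers always leaves a choice.

Lower bound: give vertex `i` the interval of `2p - 1` consecutive integers whose left ends run
`0, p - 1, 1, p - 2, 2, …`. Adjacent labels differ by at least `p`, which forces the label of
vertex `2j` into `[j, 2p - 2 - j]`; so vertex `2p - 2` gets `p - 1`, and no integer in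
`[0, 2p - 2]` is at distance `≥ p` from it, leaving vertex `2p - 1` without a label. Lists of
fewer than `2p` integers can be chosen inside these intervals.
-/

section ListLpq

variable {V : Type*} (H : SimpleGraph V) (p q n : ℕ)

def IsLpqChoosable : Prop :=
  ∀ L : V → Finset ℤ, (∀ v, (L v).card = n) → ∃ f, IsLpqLabelling H p q f ∧ ∀ v, f v ∈ L v

variable {H p q n}

theorem listLpqChromatic_le (h : IsLpqChoosable H p q n) : listLpqChromatic H p q ≤ n :=
  Nat.sInf_le h

theorem le_listLpqChromatic (hne : ∃ m, IsLpqChoosable H p q m)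
    (h : ∀ m, IsLpqChoosable H p q m → n ≤ m) : n ≤ listLpqChromatic H p q :=
  le_csInf hne h

end ListLpq

namespace SimpleGraph

theorem pathGraph_dist_eq_two {k : ℕ} {u v : Fin k} (h : (pathGraph k).dist u v = 2) :
    u.val + 2 = v.val ∨ v.val + 2 = u.val := by
  have h2 : (pathGraph k).edist u v = 2 := (ENat.toNat_eq_iff two_ne_zero).mp h
  obtain ⟨hne, -, w, hw⟩ := edist_eq_two_iff.mp h2
  rw [mem_commonNeighbors, pathGraph_adj, pathGraph_adj] at hw
  have := Fin.val_ne_of_ne hne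
  omega

theorem isLpqLabelling_pathGraph_of_seq {p k : ℕ} (f : ℕ → ℤ)
    (hadj : ∀ i, (p : ℤ) ≤ |f (i + 1) - f i|) (hdist : ∀ i, f (i + 2) ≠ f i) :
    IsLpqLabelling (pathGraph k) p 1 (fun v => f v) := by
  refine ⟨fun u v huv => ?_, fun u v huv => ?_⟩
  · rcases pathGraph_adj.mp huv with h | h
    · simpa [← h, abs_sub_comm] using hadj u
    · simpa [← h] using hadj v
  · refine Int.one_le_abs (sub_ne_zero.mpr ?_)
    rcases pathGraph_dist_eq_two huv with h | h
    · simpa [← h] using (hdist u).symm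
    · simpa [← h] using hdist v

end SimpleGraph

theorem Int.exists_mem_le_abs_sub_ne {p : ℕ} (hp : 1 ≤ p) {s : Finset ℤ}
    (hs : 2 * p + 1 ≤ s.card) (x y : ℤ) : ∃ z ∈ s, (p : ℤ) ≤ |z - y| ∧ z ≠ x := by
  have hforbidden : (insert x (Finset.Ioo (y - p) (y + p))).card < s.card :=
    calc _ ≤ (Finset.Ioo (y - p) (y + p)).card + 1 := Finset.card_insert_le _ _
      _ = 2 * p := by rw [Int.card_Ioo]; omega
      _ < s.card := by omega
  obtain ⟨z, hz, hzx⟩ := Finset.exists_mem_notMem_of_card_lt_card hforbidden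
  simp only [Finset.mem_insert, Finset.mem_Ioo, not_or] at hzx
  exact ⟨z, hz, by rw [le_abs]; omega, hzx.1⟩

theorem Int.exists_seq_mem_of_two_mul_add_one_le_card {p : ℕ} (hp : 1 ≤ p)
    (L : ℕ → Finset ℤ) (hL : ∀ i, 2 * p + 1 ≤ (L i).card) :
    ∃ f : ℕ → ℤ, ∀ i, f i ∈ L i ∧ (p : ℤ) ≤ |f (i + 1) - f i| ∧ f (i + 2) ≠ f i := by
  choose next hmem hfar hne using fun i => Int.exists_mem_le_abs_sub_ne hp (hL i)
  -- `g n` holds the labels of vertices `n - 2` and `n - 1`; the first two are dummies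
  let g : ℕ → ℤ × ℤ := fun n => Nat.rec (0, 0) (fun i g => (g.2, next i g.1 g.2)) n
  exact ⟨fun n => (g (n + 1)).2, fun i => ⟨hmem _ _ _, hfar _ _ _, hne _ _ _⟩⟩

theorem SimpleGraph.isLpqChoosable_pathGraph {p : ℕ} (hp : 1 ≤ p) (k : ℕ) :
    IsLpqChoosable (pathGraph k) p 1 (2 * p + 1) := by
  intro L hL
  let L' : ℕ → Finset ℤ := fun i => if h : i < k then L ⟨i, h⟩ else Finset.Icc 0 (2 * p)
  obtain ⟨f, hf⟩ := Int.exists_seq_mem_of_two_mul_add_one_le_card hp L' fun i => by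
    unfold L'
    split_ifs
    · exact (hL _).ge
    · simp
  refine ⟨_, isLpqLabelling_pathGraph_of_seq f (fun i => (hf i).2.1) (fun i => (hf i).2.2),
    fun v => ?_⟩
  simpa [L', v.isLt] using (hf v).1

/-- Left ends `0, p - 1, 1, p - 2, 2, …` of the intervals `zigzagList p i`. -/
def zigzagOffset (p i : ℕ) : ℤ :=
  if i % 2 = 0 then ((i / 2 : ℕ) : ℤ) else (p : ℤ) - 1 - ((i / 2 : ℕ) : ℤ)

theorem zigzagOffset_even (p j : ℕ) : zigzagOffset p (2 * j) = j := by
  simp only [zigzagOffset, if_pos (show 2 * j % 2 = 0 by omega)]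
  omega

theorem zigzagOffset_odd (p j : ℕ) : zigzagOffset p (2 * j + 1) = (p : ℤ) - 1 - j := by
  simp only [zigzagOffset, if_neg (show ¬(2 * j + 1) % 2 = 0 by omega)]
  omega

noncomputable def zigzagList (p i : ℕ) : Finset ℤ :=
  Finset.Icc (zigzagOffset p i) (zigzagOffset p i + (2 * p - 2))

theorem card_zigzagList (p i : ℕ) : (zigzagList p i).card = 2 * p - 1 := by
  rw [zigzagList, Int.card_Icc]
  omega

theorem apply_two_mul_mem_Icc_of_mem_zigzagList {p : ℕ} {f : ℕ → ℤ}
    (hmem : ∀ i < 2 * p, f i ∈ zigzagList p i)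
    (hadj : ∀ i, i + 1 < 2 * p → (p : ℤ) ≤ |f (i + 1) - f i|) {j : ℕ} (hj : j < p) :
    f (2 * j) ∈ Set.Icc (j : ℤ) (2 * p - 2 - j) := by
  induction j with
  | zero => simpa [zigzagList, zigzagOffset] using hmem 0 (by omega)
  | succ j ih =>
    obtain ⟨hlo, hhi⟩ := ih (by omega)
    have hodd := hmem (2 * j + 1) (by omega)
    have heven := hmem (2 * (j + 1)) (by omega)
    rw [zigzagList, Finset.mem_Icc, zigzagOffset_odd] at hodd
    rw [zigzagList, Finset.mem_Icc, zigzagOffset_even] at heven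
    have h₁ := hadj (2 * j) (by omega)
    have h₂ := hadj (2 * j + 1) (by omega)
    rw [show 2 * j + 1 + 1 = 2 * (j + 1) by omega] at h₂
    rw [le_abs] at h₁ h₂
    -- `f (2j+1)` must jump up from `f (2j)`, so `f (2j+2)` must jump back down
    constructor <;> omega

theorem exists_abs_sub_lt_of_mem_zigzagList {p : ℕ} (hp : 1 ≤ p) {f : ℕ → ℤ}
    (hmem : ∀ i < 2 * p, f i ∈ zigzagList p i) :
    ∃ i, i + 1 < 2 * p ∧ |f (i + 1) - f i| < p := by
  by_contra! hadj
  obtain ⟨hlo, hhi⟩ :=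
    apply_two_mul_mem_Icc_of_mem_zigzagList hmem hadj (show p - 1 < p by omega)
  have hodd := hmem (2 * (p - 1) + 1) (by omega)
  rw [zigzagList, Finset.mem_Icc, zigzagOffset_odd] at hodd
  have hstep := hadj (2 * (p - 1)) (by omega)
  rw [le_abs] at hstep
  omega

theorem SimpleGraph.not_isLpqChoosable_pathGraph {p q k n : ℕ} (hk : 2 * p ≤ k)
    (hn : n < 2 * p) : ¬ IsLpqChoosable (pathGraph k) p q n := by
  intro h
  have hsub (i : Fin k) : ∃ s ⊆ zigzagList p i, s.card = n :=
    Finset.exists_subset_card_eq (by rw [card_zigzagList]; omega)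
  choose L hLsub hLcard using hsub
  obtain ⟨f, hf, hfL⟩ := h L hLcard
  let F : ℕ → ℤ := fun i => if h : i < k then f ⟨i, h⟩ else 0
  obtain ⟨i, hi, hclose⟩ := exists_abs_sub_lt_of_mem_zigzagList (p := p) (f := F) (by omega)
    fun i hi => by simpa [F, show i < k by omega] using hLsub _ (hfL ⟨i, by omega⟩)
  have hfar := hf.1 ⟨i, by omega⟩ ⟨i + 1, by omega⟩ (pathGraph_adj.mpr (Or.inl rfl))
  simp only [F, dif_pos (show i < k by omega), dif_pos (show i + 1 < k by omega)] at hclose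
  rw [abs_sub_comm] at hfar
  omega

/-- if k > 2p then 2p ≤ χ_l^{p,1}(P_k) ≤ 2p + 1. -/
theorem listLpqChromatic_pathGraph (p k : ℕ) (hp : 1 ≤ p) (hk : 2 * p < k) :
    2 * p ≤ listLpqChromatic (SimpleGraph.pathGraph k) p 1 ∧
    listLpqChromatic (SimpleGraph.pathGraph k) p 1 ≤ 2 * p + 1 := by
  have hchoosable := isLpqChoosable_pathGraph hp k
  refine ⟨le_listLpqChromatic ⟨_, hchoosable⟩ fun n hn => ?_, listLpqChromatic_le hchoosable⟩
  by_contra! hlt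
  exact not_isLpqChoosable_pathGraph hk.le hlt hn
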